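/- arXiv:2207.07847 — 4 statements merged into one kernel-verified Lean document; each statement's English description precedes it below -/
import Mathlib

section
/- Let n, k be natural numbers, let L be a real n×n matrix, let M be a real n×k matrix, and let P = [I | M] be the real n×(n+k) block matrix whose first n columns form the identity matrix and whose last k columns are M. Then for every b ∈ ℝⁿ and every x̃ ∈ ℝ^{n+k}, if (Pᵀ L P) x̃ = Pᵀ b, then the vector x = P x̃ satisfies L x = b. -/
open Matrix

namespace Matrix

variable {m n R : Type*} [Fintype m] [Fintype n] [DecidableEq m] [CommSemiring R]

theorem transpose_mulVec_injective_of_mul_eq_one {P : Matrix m n R} {Q : Matrix n m R}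
    (hPQ : P * Q = 1) : Function.Injective Pᵀ.mulVec := fun v w hvw => by
  simpa [mulVec_mulVec, ← transpose_mul, hPQ] using congrArg (Qᵀ *ᵥ ·) hvw

theorem mulVec_mulVec_eq_of_transpose_mul_mul_mulVec_eq {P : Matrix m n R} {Q : Matrix n m R}
    (hPQ : P * Q = 1) {L : Matrix m m R} {x : n → R} {b : m → R}
    (h : (Pᵀ * L * P) *ᵥ x = Pᵀ *ᵥ b) :
    L *ᵥ (P *ᵥ x) = b :=
  transpose_mulVec_injective_of_mul_eq_one hPQ <| by
    simpa only [mulVec_mulVec, Matrix.mul_assoc] using h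

theorem fromCols_one_mul_fromRows_one_zero {k : Type*} [Fintype k] (M : Matrix m k R) :
    fromCols (1 : Matrix m m R) M * fromRows (1 : Matrix m m R) (0 : Matrix k m R) = 1 := by
  rw [fromCols_mul_fromRows, Matrix.one_mul, Matrix.mul_zero, add_zero]

end Matrix

/-- If `P = [I | M]`, `b ∈ ℝⁿ`, `xt ∈ ℝ^{n+k}` and `(Pᵀ L P) xt = Pᵀ b`, then
`x = P xt` satisfies `L x = b`. -/
theorem expanded_system_solution (n k : ℕ)
    (L : Matrix (Fin n) (Fin n) ℝ) (M : Matrix (Fin n) (Fin k) ℝ)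
    (P : Matrix (Fin n) (Fin n ⊕ Fin k) ℝ)
    (hP : P = Matrix.fromCols 1 M)
    (b : Fin n → ℝ) (xt : Fin n ⊕ Fin k → ℝ)
    (h : (Pᵀ * L * P).mulVec xt = Pᵀ.mulVec b) :
    L.mulVec (P.mulVec xt) = b := by
  subst hP
  exact mulVec_mulVec_eq_of_transpose_mul_mul_mulVec_eq (fromCols_one_mul_fromRows_one_zero M) h
end

section
/- Let n ≥ 1 and let N, H : ℝ → (real symmetric n×n matrices) be functions that are continuous on the interval [0,1], such that N(0) = 0 and such that for every μ ∈ [0,1] and every nonzero v ∈ ℝⁿ orthogonal to the all-ones vector one has ⟨H(μ) v, v⟩ > 0. Then for every ρ with 0 < ρ ≤ 1 there exists μ* with 0 < μ* < 1 such that for all μ with 0 < μ < μ* and all v ∈ ℝⁿ orthogonal to the all-ones vector, ⟨N(μ) v, v⟩ ≤ ρ · ⟨H(μ) v, v⟩. -/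
open Matrix
set_option maxHeartbeats 1000000

private lemma quad_contOn (n : ℕ) (A : ℝ → Matrix (Fin n) (Fin n) ℝ) (s : Set ℝ)
    (hA : ContinuousOn A s) (T : Set (Fin n → ℝ)) :
    ContinuousOn (fun p : ℝ × (Fin n → ℝ) => (A p.1).mulVec p.2 ⬝ᵥ p.2) (s ×ˢ T) := by
  have hA' : ContinuousOn (fun p : ℝ × (Fin n → ℝ) => A p.1) (s ×ˢ T) :=
    hA.comp continuousOn_fst fun p hp => hp.1
  have hAij : ∀ i j, ContinuousOn (fun p : ℝ × (Fin n → ℝ) => A p.1 i j) (s ×ˢ T) := by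
    intro i j
    exact ((continuous_apply j).comp (continuous_apply i)).comp_continuousOn hA'
  simp only [Matrix.mulVec, dotProduct]
  apply continuousOn_finset_sum
  intro i _
  apply ContinuousOn.mul
  · exact continuousOn_finset_sum _ fun j _ =>
      (hAij i j).mul ((continuous_apply j).comp continuous_snd).continuousOn
  · exact ((continuous_apply i).comp continuous_snd).continuousOn

private lemma quad_smul (n : ℕ) (M : Matrix (Fin n) (Fin n) ℝ) (c : ℝ) (v : Fin n → ℝ) :
    M.mulVec (c • v) ⬝ᵥ (c • v) = c ^ 2 * (M.mulVec v ⬝ᵥ v) := by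
  rw [Matrix.mulVec_smul, smul_dotProduct, dotProduct_smul, smul_eq_mul, smul_eq_mul]
  ring

/-- For continuous families of symmetric matrices `N, H` on `[0,1]` with `N 0 = 0`
and `⟨H(μ) v, v⟩ > 0` for all nonzero `v ⊥ 1`, for every `0 < ρ ≤ 1` there is
`0 < μ* < 1` such that `⟨N(μ) v, v⟩ ≤ ρ ⟨H(μ) v, v⟩` for all `0 < μ < μ*` and all
`v ⊥ 1`. -/
theorem exists_mu_star (n : ℕ) (hn : 1 ≤ n)
    (N H : ℝ → Matrix (Fin n) (Fin n) ℝ)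
    (hNsym : ∀ μ, (N μ).IsSymm) (hHsym : ∀ μ, (H μ).IsSymm)
    (hNcont : ContinuousOn N (Set.Icc 0 1)) (hHcont : ContinuousOn H (Set.Icc 0 1))
    (hN0 : N 0 = 0)
    (hHpos : ∀ μ ∈ Set.Icc (0 : ℝ) 1, ∀ v : Fin n → ℝ, v ≠ 0 →
      v ⬝ᵥ (fun _ => 1) = 0 → 0 < (H μ).mulVec v ⬝ᵥ v) :
    ∀ ρ : ℝ, 0 < ρ → ρ ≤ 1 → ∃ μstar : ℝ, 0 < μstar ∧ μstar < 1 ∧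
      ∀ μ : ℝ, 0 < μ → μ < μstar → ∀ v : Fin n → ℝ, v ⬝ᵥ (fun _ => 1) = 0 →
        (N μ).mulVec v ⬝ᵥ v ≤ ρ * ((H μ).mulVec v ⬝ᵥ v) := by
  intro ρ hρ hρ1
  -- The compact set S : unit sphere intersected with the hyperplane v ⊥ 1
  set S : Set (Fin n → ℝ) :=
    Metric.sphere 0 1 ∩ {v | v ⬝ᵥ (fun _ => 1) = 0} with hSdef
  have hdotcont : Continuous (fun v : Fin n → ℝ => v ⬝ᵥ (fun _ => 1)) := by
    simp only [dotProduct]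
    exact continuous_finset_sum _ fun i _ => (continuous_apply i).mul continuous_const
  have hScomp : IsCompact S :=
    (isCompact_sphere 0 1).inter_right (isClosed_eq hdotcont continuous_const)
  -- members of S
  have hSmem : ∀ v ∈ S, v ≠ 0 ∧ v ⬝ᵥ (fun _ => 1) = 0 := by
    intro v hv
    refine ⟨?_, hv.2⟩
    have : ‖v‖ = 1 := by
      have := hv.1
      rwa [Metric.mem_sphere, dist_zero_right] at this
    intro h; rw [h, norm_zero] at this; norm_num at this
  -- the function g
  set g : ℝ × (Fin n → ℝ) → ℝ := fun p =>
    (N p.1).mulVec p.2 ⬝ᵥ p.2 - ρ * ((H p.1).mulVec p.2 ⬝ᵥ p.2) with hgdef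
  set K : Set (ℝ × (Fin n → ℝ)) := (Set.Icc 0 1) ×ˢ S with hKdef
  have hKcomp : IsCompact K := isCompact_Icc.prod hScomp
  have hgcont : ContinuousOn g K := by
    rw [hgdef, hKdef]
    exact (quad_contOn n N _ hNcont S).sub
      (continuousOn_const.mul (quad_contOn n H _ hHcont S))
  -- g is negative at μ = 0 on S
  have hg0 : ∀ v ∈ S, g (0, v) < 0 := by
    intro v hv
    obtain ⟨hv0, hvorth⟩ := hSmem v hv
    have hH := hHpos 0 ⟨le_refl 0, zero_le_one⟩ v hv0 hvorth
    simp only [hgdef, hN0, Matrix.zero_mulVec, zero_dotProduct]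
    nlinarith
  -- from negativity of g on a slice, derive the inequality for all orthogonal v
  have key : ∀ μ : ℝ, (∀ v ∈ S, g (μ, v) < 0) →
      ∀ v : Fin n → ℝ, v ⬝ᵥ (fun _ => 1) = 0 →
        (N μ).mulVec v ⬝ᵥ v ≤ ρ * ((H μ).mulVec v ⬝ᵥ v) := by
    intro μ hg v hvorth
    by_cases hv : v = 0
    · subst hv
      simp [Matrix.mulVec_zero]
    · set c : ℝ := ‖v‖⁻¹ with hc
      have hvn : (0 : ℝ) < ‖v‖ := norm_pos_iff.mpr hv
      have hcpos : 0 < c := inv_pos.mpr hvn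
      have hwS : c • v ∈ S := by
        constructor
        · rw [Metric.mem_sphere, dist_zero_right, norm_smul, Real.norm_eq_abs,
            abs_of_pos hcpos, hc, inv_mul_cancel₀ (ne_of_gt hvn)]
        · show (c • v) ⬝ᵥ (fun _ => 1) = 0
          rw [smul_dotProduct, hvorth, smul_zero]
      have := hg (c • v) hwS
      simp only [hgdef] at this
      rw [quad_smul, quad_smul] at this
      have hc2 : 0 < c ^ 2 := by positivity
      nlinarith
  -- the bad set C
  set C : Set (ℝ × (Fin n → ℝ)) := K ∩ g ⁻¹' (Set.Ici 0) with hCdef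
  have hCcomp : IsCompact C := by
    apply hKcomp.of_isClosed_subset
    · exact hgcont.preimage_isClosed_of_isClosed hKcomp.isClosed isClosed_Ici
    · exact Set.inter_subset_left
  rcases Set.eq_empty_or_nonempty C with hCe | hCne
  · -- no bad points: μ* = 1/2 works
    refine ⟨1/2, by norm_num, by norm_num, ?_⟩
    intro μ hμ0 hμ v hvorth
    apply key μ _ v hvorth
    intro w hw
    by_contra hcon
    push_neg at hcon
    have : (μ, w) ∈ C := ⟨⟨⟨le_of_lt hμ0, by linarith⟩, hw⟩, hcon⟩
    rw [hCe] at this; exact this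
  · obtain ⟨⟨μ₀, v₀⟩, hp₀C, hp₀min⟩ := hCcomp.exists_isMinOn hCne continuous_fst.continuousOn
    have hp₀pos : 0 < μ₀ := by
      rcases lt_or_eq_of_le hp₀C.1.1.1 with h | h
      · exact h
      · exfalso
        have hvS : v₀ ∈ S := hp₀C.1.2
        have hge : (0:ℝ) ≤ g (μ₀, v₀) := hp₀C.2
        have : g (0, v₀) < 0 := hg0 v₀ hvS
        have h' : μ₀ = 0 := h.symm
        rw [h'] at hge
        linarith
    refine ⟨min μ₀ 1 / 2, by positivity, ?_, ?_⟩
    · have : min μ₀ 1 ≤ 1 := min_le_right _ _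
      linarith
    · intro μ hμ0 hμ v hvorth
      have hμ1 : μ < 1 := by
        have : min μ₀ 1 ≤ 1 := min_le_right _ _
        linarith
      have hμp₀ : μ < μ₀ := by
        have : min μ₀ 1 ≤ μ₀ := min_le_left _ _
        linarith
      apply key μ _ v hvorth
      intro w hw
      by_contra hcon
      push_neg at hcon
      have hmem : (μ, w) ∈ C := ⟨⟨⟨le_of_lt hμ0, le_of_lt hμ1⟩, hw⟩, hcon⟩
      have hle : μ₀ ≤ μ := hp₀min hmem
      exact absurd hle (not_le.mpr hμp₀)
end

section
/- Let A, H, N be real symmetric n×n matrices such that A = H − N, A is positive semidefinite, N is positive semidefinite, and let ρ ∈ (0,1) satisfy ⟨N v, v⟩ ≤ ρ · ⟨H v, v⟩ for all v ∈ ℝⁿ. Suppose λ₁, λ₂ ∈ ℝ and v₁, v₂ ∈ ℝⁿ satisfy A v₁ = λ₁ · (H v₁), A v₂ = λ₂ · (H v₂), ⟨A v₁, v₁⟩ > 0, and ⟨A v₂, v₂⟩ > 0. Then λ₂ > 0 and λ₁ / λ₂ ≤ 1 / (1 − ρ). -/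
/-!
Along a generalized eigenvector `A v = λ H v` with `⟨A v, v⟩ > 0`, the eigenvalue is the Rayleigh
quotient `λ = ⟨A v, v⟩ / ⟨H v, v⟩`, and `⟨A v, v⟩ = ⟨H v, v⟩ - ⟨N v, v⟩` lies between
`(1 - ρ) ⟨H v, v⟩` and `⟨H v, v⟩`. Hence every such eigenvalue lies in `[1 - ρ, 1]`, and the
ratio of two of them is at most `1 / (1 - ρ)`.
-/

open Matrix

namespace Matrix

variable {ι : Type*} [Fintype ι] {A H N : Matrix ι ι ℝ} {v : ι → ℝ} {lam : ℝ}

theorem PosSemidef.mulVec_dotProduct_self_nonneg (hN : N.PosSemidef) (v : ι → ℝ) :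
    0 ≤ N *ᵥ v ⬝ᵥ v := by
  simpa [dotProduct_comm] using hN.dotProduct_mulVec_nonneg v

theorem mulVec_dotProduct_self_of_eq_sub (hAHN : A = H - N) :
    A *ᵥ v ⬝ᵥ v = H *ᵥ v ⬝ᵥ v - N *ᵥ v ⬝ᵥ v := by
  rw [hAHN, sub_mulVec, sub_dotProduct]

theorem mulVec_dotProduct_self_of_eq_smul (h : A *ᵥ v = lam • H *ᵥ v) :
    A *ᵥ v ⬝ᵥ v = lam * (H *ᵥ v ⬝ᵥ v) := by
  rw [h, smul_dotProduct, smul_eq_mul]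

theorem mulVec_dotProduct_self_le_of_eq_sub (hAHN : A = H - N) (hN : N.PosSemidef) :
    A *ᵥ v ⬝ᵥ v ≤ H *ᵥ v ⬝ᵥ v := by
  rw [mulVec_dotProduct_self_of_eq_sub hAHN]
  linarith [hN.mulVec_dotProduct_self_nonneg v]

theorem generalized_eigenvalue_eq_div (hAHN : A = H - N) (hN : N.PosSemidef)
    (h : A *ᵥ v = lam • H *ᵥ v) (hpos : 0 < A *ᵥ v ⬝ᵥ v) :
    0 < H *ᵥ v ⬝ᵥ v ∧ lam = (A *ᵥ v ⬝ᵥ v) / (H *ᵥ v ⬝ᵥ v) := by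
  have hH : 0 < H *ᵥ v ⬝ᵥ v := hpos.trans_le (mulVec_dotProduct_self_le_of_eq_sub hAHN hN)
  exact ⟨hH, by rw [mulVec_dotProduct_self_of_eq_smul h, mul_div_cancel_right₀ _ hH.ne']⟩

theorem generalized_eigenvalue_le_one (hAHN : A = H - N) (hN : N.PosSemidef)
    (h : A *ᵥ v = lam • H *ᵥ v) (hpos : 0 < A *ᵥ v ⬝ᵥ v) : lam ≤ 1 := by
  obtain ⟨hH, rfl⟩ := generalized_eigenvalue_eq_div hAHN hN h hpos
  exact (div_le_one hH).2 (mulVec_dotProduct_self_le_of_eq_sub hAHN hN)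

theorem one_sub_le_generalized_eigenvalue {ρ : ℝ} (hAHN : A = H - N) (hN : N.PosSemidef)
    (hbound : N *ᵥ v ⬝ᵥ v ≤ ρ * (H *ᵥ v ⬝ᵥ v))
    (h : A *ᵥ v = lam • H *ᵥ v) (hpos : 0 < A *ᵥ v ⬝ᵥ v) : 1 - ρ ≤ lam := by
  obtain ⟨hH, rfl⟩ := generalized_eigenvalue_eq_div hAHN hN h hpos
  rw [le_div_iff₀ hH, mulVec_dotProduct_self_of_eq_sub hAHN]
  linarith

end Matrix

theorem condition_number_bound_general (n : ℕ)
    (A H N : Matrix (Fin n) (Fin n) ℝ)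
    (hAHN : A = H - N)
    (hN : N.PosSemidef)
    (ρ : ℝ) (hρ1 : ρ < 1)
    (hbound : ∀ v : Fin n → ℝ, N.mulVec v ⬝ᵥ v ≤ ρ * (H.mulVec v ⬝ᵥ v))
    (lam₁ lam₂ : ℝ) (v₁ v₂ : Fin n → ℝ)
    (h₁ : A.mulVec v₁ = lam₁ • H.mulVec v₁)
    (h₂ : A.mulVec v₂ = lam₂ • H.mulVec v₂)
    (hpos₁ : 0 < A.mulVec v₁ ⬝ᵥ v₁) (hpos₂ : 0 < A.mulVec v₂ ⬝ᵥ v₂) :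
    0 < lam₂ ∧ lam₁ / lam₂ ≤ 1 / (1 - ρ) := by
  have hlam₁ : lam₁ ≤ 1 := generalized_eigenvalue_le_one hAHN hN h₁ hpos₁
  have hlam₂ : 1 - ρ ≤ lam₂ :=
    one_sub_le_generalized_eigenvalue hAHN hN (hbound v₂) h₂ hpos₂
  have hgap : 0 < 1 - ρ := sub_pos.2 hρ1
  refine ⟨hgap.trans_le hlam₂, ?_⟩
  calc lam₁ / lam₂ ≤ 1 / lam₂ := div_le_div_of_nonneg_right hlam₁ (hgap.le.trans hlam₂)
    _ ≤ 1 / (1 - ρ) := one_div_le_one_div_of_le hgap hlam₂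

/-- Condition number bound: under the spectral-equivalence hypotheses, the ratio of
any two nonzero generalized eigenvalues of the pencil `(A, H)` is at most
`1 / (1 − ρ)`. -/
theorem condition_number_bound (n : ℕ)
    (A H N : Matrix (Fin n) (Fin n) ℝ)
    (hH : H.IsSymm) (hAHN : A = H - N)
    (hA : A.PosSemidef) (hN : N.PosSemidef)
    (ρ : ℝ) (hρ0 : 0 < ρ) (hρ1 : ρ < 1)
    (hbound : ∀ v : Fin n → ℝ, N.mulVec v ⬝ᵥ v ≤ ρ * (H.mulVec v ⬝ᵥ v))
    (lam₁ lam₂ : ℝ) (v₁ v₂ : Fin n → ℝ)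
    (h₁ : A.mulVec v₁ = lam₁ • H.mulVec v₁)
    (h₂ : A.mulVec v₂ = lam₂ • H.mulVec v₂)
    (hpos₁ : 0 < A.mulVec v₁ ⬝ᵥ v₁) (hpos₂ : 0 < A.mulVec v₂ ⬝ᵥ v₂) :
    0 < lam₂ ∧ lam₁ / lam₂ ≤ 1 / (1 - ρ) :=
  condition_number_bound_general n A H N hAHN hN ρ hρ1 hbound lam₁ lam₂ v₁ v₂ h₁ h₂ hpos₁ hpos₂
end

section
/- Let n, k be natural numbers with k ≥ 1, let L be a real symmetric positive semidefinite n×n matrix with rank L = n − 1 and L · 1ₙ = 0, let M be a real n×k matrix, and let P = [I | M] be the real n×(n+k) block matrix whose first n columns form the identity. Suppose P · 1_{n+k} = c · 1ₙ for some real scalar c. Then there exists a nonzero vector v ∈ ℝ^{n+k} such that (Pᵀ L P) v = 0 and v is orthogonal to the all-ones vector 1_{n+k}. -/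
/-!
Since `P = [I | M]`, every vector `(-M z, z)` lies in `ker P`, and `(1, 0)` is mapped by `P` to
`1 ∈ ker L`; both therefore lie in `ker (Pᵀ L P)`. For `z ≠ 0` (possible as `k ≥ 1`) and `n ≥ 1`
(forced by the rank condition) these two vectors are linearly independent, and a suitable
combination of them is orthogonal to the all-ones vector.
-/

open Matrix

theorem LinearIndependent.exists_mem_ne_zero_apply_eq_zero_of_pair {R V : Type*} [CommRing R]
    [Nontrivial R] [AddCommGroup V] [Module R V] (φ : V →ₗ[R] R) {S : Submodule R V} {x y : V}
    (hxy : LinearIndependent R ![x, y]) (hx : x ∈ S) (hy : y ∈ S) :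
    ∃ v ∈ S, v ≠ 0 ∧ φ v = 0 := by
  by_cases hφ : φ x = 0 ∧ φ y = 0
  · exact ⟨x, hx, hxy.ne_zero 0, hφ.1⟩
  -- `φ y • x - φ x • y` is killed by `φ`, and vanishes only when both coefficients do.
  refine ⟨φ y • x - φ x • y, S.sub_mem (S.smul_mem _ hx) (S.smul_mem _ hy), fun h0 => hφ ?_, ?_⟩
  · have := LinearIndependent.pair_iff.mp hxy (φ y) (-φ x) (by rw [neg_smul, ← sub_eq_add_neg, h0])
    exact ⟨neg_eq_zero.mp this.2, this.1⟩
  · simp only [map_sub, map_smul, smul_eq_mul]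
    ring

namespace Matrix

variable {R m n o : Type*}

theorem mulVec_transpose_mul_mul_eq_zero [Fintype m] [Fintype n] [NonUnitalCommSemiring R]
    {L : Matrix m m R} {P : Matrix m n R}
    {x : n → R} (h : L *ᵥ (P *ᵥ x) = 0) : (Pᵀ * L * P) *ᵥ x = 0 := by
  rw [← mulVec_mulVec, ← mulVec_mulVec, h, mulVec_zero]

theorem fromCols_one_mulVec_sumElim [Fintype m] [DecidableEq m] [Fintype o] [Semiring R]
    (M : Matrix m o R) (y : m → R) (z : o → R) :
    fromCols 1 M *ᵥ Sum.elim y z = y + M *ᵥ z := by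
  rw [fromCols_mulVec_sumElim, one_mulVec]

theorem linearIndependent_sumElim_one_zero_sumElim [Nonempty m] [Ring R] [NoZeroDivisors R]
    {z : o → R} (hz : z ≠ 0) (w : m → R) :
    LinearIndependent R ![Sum.elim (1 : m → R) 0, Sum.elim w z] := by
  refine LinearIndependent.pair_iff.mpr fun s t hst => ?_
  obtain ⟨j, hj⟩ := Function.ne_iff.mp hz
  have ht : t * z j = 0 := by simpa using congrFun hst (Sum.inr j)
  obtain rfl : t = 0 := (mul_eq_zero.mp ht).resolve_right hj
  exact ⟨by simpa using congrFun hst (Sum.inl (Classical.arbitrary m)), rfl⟩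

end Matrix

theorem exists_kernel_vector_orthogonal_to_ones_general (n k : ℕ) (hk : 1 ≤ k)
    (L : Matrix (Fin n) (Fin n) ℝ)
    (hrank : (L.rank : ℤ) = (n : ℤ) - 1)
    (hLone : L.mulVec (fun _ => 1) = 0)
    (M : Matrix (Fin n) (Fin k) ℝ)
    (P : Matrix (Fin n) (Fin n ⊕ Fin k) ℝ)
    (hP : P = Matrix.fromCols 1 M) :
    ∃ v : Fin n ⊕ Fin k → ℝ, v ≠ 0 ∧ (Pᵀ * L * P).mulVec v = 0 ∧
      v ⬝ᵥ (fun _ => 1) = 0 := by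
  have : Nonempty (Fin n) := ⟨⟨0, by omega⟩⟩
  have : Nonempty (Fin k) := ⟨⟨0, hk⟩⟩
  have hx : (Pᵀ * L * P) *ᵥ Sum.elim 1 0 = 0 :=
    mulVec_transpose_mul_mul_eq_zero <| by
      rw [hP, fromCols_one_mulVec_sumElim, mulVec_zero, add_zero]
      exact hLone
  have hy : (Pᵀ * L * P) *ᵥ Sum.elim (-(M *ᵥ 1)) 1 = 0 :=
    mulVec_transpose_mul_mul_eq_zero <| by
      rw [hP, fromCols_one_mulVec_sumElim, neg_add_cancel, mulVec_zero]
  obtain ⟨v, hv, hv0, hv1⟩ :=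
    (linearIndependent_sumElim_one_zero_sumElim one_ne_zero (-(M *ᵥ 1))
      ).exists_mem_ne_zero_apply_eq_zero_of_pair (dotProductBilin ℝ ℝ |>.flip fun _ => 1)
      (S := LinearMap.ker (Pᵀ * L * P).mulVecLin) hx hy
  exact ⟨v, hv0, hv, hv1⟩

/-- If `L` is symmetric PSD of rank `n − 1` with `L · 1 = 0`, `P = [I | M]` maps the
all-ones vector to a multiple of the all-ones vector, and `k ≥ 1`, then there is a
nonzero vector in the kernel of `Pᵀ L P` orthogonal to the all-ones vector. -/
theorem exists_kernel_vector_orthogonal_to_ones (n k : ℕ) (hk : 1 ≤ k)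
    (L : Matrix (Fin n) (Fin n) ℝ) (hL : L.PosSemidef)
    (hrank : (L.rank : ℤ) = (n : ℤ) - 1)
    (hLone : L.mulVec (fun _ => 1) = 0)
    (M : Matrix (Fin n) (Fin k) ℝ)
    (P : Matrix (Fin n) (Fin n ⊕ Fin k) ℝ)
    (hP : P = Matrix.fromCols 1 M) (c : ℝ)
    (hPone : P.mulVec (fun _ => 1) = fun _ => c) :
    ∃ v : Fin n ⊕ Fin k → ℝ, v ≠ 0 ∧ (Pᵀ * L * P).mulVec v = 0 ∧
      v ⬝ᵥ (fun _ => 1) = 0 :=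
  exists_kernel_vector_orthogonal_to_ones_general n k hk L hrank hLone M P hP
end
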